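/- arXiv:1508.06961 — 3 statements merged into one kernel-verified Lean document; each statement's English description precedes it below -/
import Mathlib

section
/- Let G(p) be a formation in ℝᵈ (d ≥ 2, n ≥ 2) with at least one edge (so there exist i, j with p_i ≠ p_j). Then the rank of the bearing rigidity matrix R_B satisfies rank(R_B) ≤ dn − d − 1; equivalently, the null space of R_B has dimension at least d + 1. -/
open scoped InnerProductSpace

/-- The orthogonal projection matrix `P_x = I − x xᵀ/‖x‖²` onto the orthogonal
complement of a nonzero vector `x ∈ ℝᵈ`, as a linear map. -/
noncomputable def projP {d : ℕ} (x : EuclideanSpace ℝ (Fin d)) :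
    EuclideanSpace ℝ (Fin d) →ₗ[ℝ] EuclideanSpace ℝ (Fin d) :=
  LinearMap.id - (‖x‖ ^ 2)⁻¹ • ((innerSL ℝ x).toLinearMap.smulRight x)

/-- The linear map sending a configuration `x = (x_1, …, x_n)` to `x_j − x_i`. -/
noncomputable def relpos {d n : ℕ} (i j : Fin n) :
    (Fin n → EuclideanSpace ℝ (Fin d)) →ₗ[ℝ] EuclideanSpace ℝ (Fin d) :=
  LinearMap.proj (R := ℝ) (φ := fun _ : Fin n => EuclideanSpace ℝ (Fin d)) j -
    LinearMap.proj (R := ℝ) (φ := fun _ : Fin n => EuclideanSpace ℝ (Fin d)) i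

/-- The bearing `g_ij = (p_j − p_i)/‖p_j − p_i‖` of edge `(i, j)`. -/
noncomputable def bearing {d n : ℕ} (p : Fin n → EuclideanSpace ℝ (Fin d))
    (i j : Fin n) : EuclideanSpace ℝ (Fin d) :=
  ‖p j - p i‖⁻¹ • (p j - p i)

/-- The bearing rigidity matrix `R_B` of the formation `G(p)`: the linear map
`ℝ^{dn} → ℝ^{d|E|}` whose component for edge `(i,j) ∈ E` is
`(1/‖e_ij‖) P_{g_ij} (x_j − x_i)`. -/
noncomputable def RB {d n : ℕ} (E : Finset (Fin n × Fin n))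
    (p : Fin n → EuclideanSpace ℝ (Fin d)) :
    (Fin n → EuclideanSpace ℝ (Fin d)) →ₗ[ℝ] (↥E → EuclideanSpace ℝ (Fin d)) :=
  LinearMap.pi fun e =>
    ‖p e.1.2 - p e.1.1‖⁻¹ • (projP (bearing p e.1.1 e.1.2) ∘ₗ relpos e.1.1 e.1.2)

/-- The bearing Laplacian `L_B` of the formation `G(p)`: the linear map
`ℝ^{dn} → ℝ^{dn}` whose `i`-th `ℝᵈ`-block is `∑_{j : (i,j) ∈ E} P_{g_ij}(x_i − x_j)`. -/
noncomputable def LB {d n : ℕ} (E : Finset (Fin n × Fin n))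
    (p : Fin n → EuclideanSpace ℝ (Fin d)) :
    (Fin n → EuclideanSpace ℝ (Fin d)) →ₗ[ℝ] (Fin n → EuclideanSpace ℝ (Fin d)) :=
  LinearMap.pi fun i =>
    ∑ j ∈ Finset.univ.filter (fun j => (i, j) ∈ E),
      (projP (bearing p i j) ∘ₗ relpos j i)

/-- The subspace `span{𝟏 ⊗ I_d, p} = {c • p + (v, …, v) : c ∈ ℝ, v ∈ ℝᵈ}` of
translations and scalings of the configuration `p`. -/
def transScale {d n : ℕ} (p : Fin n → EuclideanSpace ℝ (Fin d)) :
    Set (Fin n → EuclideanSpace ℝ (Fin d)) :=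
  {x | ∃ (c : ℝ) (v : EuclideanSpace ℝ (Fin d)), x = c • p + fun _ => v}

/-!
Translations `(v, …, v)` lie in the null space of `R_B` because every row sees only differences
`x_j − x_i`, and so does `p` itself because `P_g g = 0` for each bearing `g`. An edge with
`p_i ≠ p_j` keeps `p` out of the `d`-dimensional space of translations, so the null space has
dimension at least `d + 1`; rank–nullity in `ℝ^{dn}` gives the bound on the rank.
-/

lemma projP_apply_self {d : ℕ} (x : EuclideanSpace ℝ (Fin d)) : projP x x = 0 := by
  rcases eq_or_ne x 0 with rfl | hx
  · simp
  · have hx2 : ‖x‖ ^ 2 ≠ 0 := pow_ne_zero _ (norm_ne_zero_iff.mpr hx)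
    simp [projP, smul_smul, inv_mul_cancel₀ hx2]

lemma LinearMap.pi_id_injective {R M ι : Type*} [Semiring R] [AddCommMonoid M] [Module R M]
    [Nonempty ι] : Function.Injective (LinearMap.pi fun _ : ι => (LinearMap.id : M →ₗ[R] M)) :=
  fun _ _ h => congrFun h (Classical.arbitrary ι)

lemma RB_apply_const {d n : ℕ} (E : Finset (Fin n × Fin n))
    (p : Fin n → EuclideanSpace ℝ (Fin d)) (v : EuclideanSpace ℝ (Fin d)) :
    RB E p (fun _ => v) = 0 := by
  funext e
  simp [RB, relpos]

lemma RB_apply_self {d n : ℕ} (E : Finset (Fin n × Fin n))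
    (p : Fin n → EuclideanSpace ℝ (Fin d)) (hsep : ∀ e ∈ E, p e.1 ≠ p e.2) :
    RB E p p = 0 := by
  funext e
  have hne : ‖p e.1.2 - p e.1.1‖ ≠ 0 :=
    norm_ne_zero_iff.mpr (sub_ne_zero.mpr (hsep e.1 e.2).symm)
  have hedge : relpos e.1.1 e.1.2 p = ‖p e.1.2 - p e.1.1‖ • bearing p e.1.1 e.1.2 := by
    rw [bearing, smul_smul, mul_inv_cancel₀ hne, one_smul]
    rfl
  simp [RB, hedge, projP_apply_self]

theorem add_one_le_finrank_ker_RB {d n : ℕ} (E : Finset (Fin n × Fin n)) (hE : E.Nonempty)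
    (p : Fin n → EuclideanSpace ℝ (Fin d)) (hsep : ∀ e ∈ E, p e.1 ≠ p e.2) :
    d + 1 ≤ Module.finrank ℝ (LinearMap.ker (RB E p)) := by
  obtain ⟨e, he⟩ := hE
  have : Nonempty (Fin n) := ⟨e.1⟩
  let translations := LinearMap.range
    (LinearMap.pi fun _ : Fin n => (LinearMap.id : EuclideanSpace ℝ (Fin d) →ₗ[ℝ] _))
  have hdim : Module.finrank ℝ translations = d := by
    rw [LinearMap.finrank_range_of_inj LinearMap.pi_id_injective, finrank_euclideanSpace_fin]
  have hp : p ∉ translations := by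
    rintro ⟨v, hv⟩
    exact hsep e he (by rw [← hv]; rfl)
  have hker : translations ⊔ Submodule.span ℝ {p} ≤ LinearMap.ker (RB E p) := by
    refine sup_le ?_ ((Submodule.span_singleton_le_iff_mem _ _).mpr (RB_apply_self E p hsep))
    rintro _ ⟨v, rfl⟩
    exact RB_apply_const E p v
  calc d + 1 = Module.finrank ℝ (translations ⊔ Submodule.span ℝ {p} : Submodule ℝ _) := by
        rw [Submodule.finrank_sup_span_singleton hp, hdim]
    _ ≤ _ := Submodule.finrank_mono hker

theorem stmt4_general {d n : ℕ}
    (E : Finset (Fin n × Fin n)) (hE : E.Nonempty)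
    (p : Fin n → EuclideanSpace ℝ (Fin d))
    (hsep : ∀ e ∈ E, p e.1 ≠ p e.2) :
    Module.finrank ℝ (LinearMap.range (RB E p)) ≤ d * n - d - 1 ∧
      d + 1 ≤ Module.finrank ℝ (LinearMap.ker (RB E p)) := by
  have hker := add_one_le_finrank_ker_RB E hE p hsep
  have hrank := LinearMap.finrank_range_add_finrank_ker (RB E p)
  simp only [Module.finrank_pi_fintype, finrank_euclideanSpace_fin, Finset.sum_const,
    Finset.card_univ, Fintype.card_fin, smul_eq_mul] at hrank
  exact ⟨by rw [Nat.mul_comm] at hrank; omega, hker⟩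

/-- For a formation `G(p)` in `ℝᵈ` (`d ≥ 2`, `n ≥ 2`) with at least one edge,
`rank(R_B) ≤ dn − d − 1`; equivalently, `dim Null(R_B) ≥ d + 1`. -/
theorem stmt4 {d n : ℕ} (hd : 2 ≤ d) (hn : 2 ≤ n)
    (E : Finset (Fin n × Fin n)) (hE : E.Nonempty)
    (p : Fin n → EuclideanSpace ℝ (Fin d))
    (hloop : ∀ e ∈ E, e.1 ≠ e.2) (hsep : ∀ e ∈ E, p e.1 ≠ p e.2) :
    Module.finrank ℝ (LinearMap.range (RB E p)) ≤ d * n - d - 1 ∧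
      d + 1 ≤ Module.finrank ℝ (LinearMap.ker (RB E p)) :=
  stmt4_general E hE p hsep
end

section
/- Let G(p) be a formation in ℝᵈ and let p' = (p'_1,…,p'_n) ∈ ℝ^{dn} be another configuration with p'_i ≠ p'_j for every edge (i,j) ∈ E; write g'_ij := (p'_j − p'_i)/‖p'_j − p'_i‖. Then G(p) and G(p') are bearing equivalent (i.e., P_{g_ij} g'_ij = 0 for all (i,j) ∈ E) if and only if R_B(p) p' = 0, where R_B(p) is the bearing rigidity matrix of G(p). -/
open scoped InnerProductSpace

section

variable {d n : ℕ}

theorem bearing_eq_smul (p : Fin n → EuclideanSpace ℝ (Fin d)) (i j : Fin n) :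
    bearing p i j = ‖p j - p i‖⁻¹ • (p j - p i) :=
  rfl

theorem inv_norm_sub_ne_zero {p : Fin n → EuclideanSpace ℝ (Fin d)} {i j : Fin n}
    (h : p i ≠ p j) : ‖p j - p i‖⁻¹ ≠ 0 :=
  inv_ne_zero (norm_ne_zero_iff.mpr (sub_ne_zero.mpr h.symm))

theorem map_bearing_eq_zero_iff {F : Type*} [AddCommGroup F] [Module ℝ F]
    (f : EuclideanSpace ℝ (Fin d) →ₗ[ℝ] F)
    {p : Fin n → EuclideanSpace ℝ (Fin d)} {i j : Fin n} (h : p i ≠ p j) :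
    f (bearing p i j) = 0 ↔ f (p j - p i) = 0 := by
  rw [bearing_eq_smul, map_smul, smul_eq_zero, or_iff_right (inv_norm_sub_ne_zero h)]

theorem RB_apply (E : Finset (Fin n × Fin n))
    (p x : Fin n → EuclideanSpace ℝ (Fin d)) (e : E) :
    RB E p x e = ‖p e.1.2 - p e.1.1‖⁻¹ • projP (bearing p e.1.1 e.1.2) (x e.1.2 - x e.1.1) :=
  rfl

theorem RB_apply_eq_zero_iff {E : Finset (Fin n × Fin n)}
    {p : Fin n → EuclideanSpace ℝ (Fin d)} (x : Fin n → EuclideanSpace ℝ (Fin d)) {e : E}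
    (he : p e.1.1 ≠ p e.1.2) :
    RB E p x e = 0 ↔ projP (bearing p e.1.1 e.1.2) (x e.1.2 - x e.1.1) = 0 := by
  rw [RB_apply, smul_eq_zero, or_iff_right (inv_norm_sub_ne_zero he)]

end

theorem stmt5_general {d n : ℕ}
    (E : Finset (Fin n × Fin n))
    (p p' : Fin n → EuclideanSpace ℝ (Fin d))
    (hsep : ∀ e ∈ E, p e.1 ≠ p e.2) (hsep' : ∀ e ∈ E, p' e.1 ≠ p' e.2) :
    (∀ e ∈ E, projP (bearing p e.1 e.2) (bearing p' e.1 e.2) = 0) ↔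
      RB E p p' = 0 := by
  rw [funext_iff, Subtype.forall]
  refine forall₂_congr fun e he => ?_
  rw [map_bearing_eq_zero_iff _ (hsep' e he), Pi.zero_apply,
    RB_apply_eq_zero_iff p' (e := ⟨e, he⟩) (hsep e he)]

/-- `G(p)` and `G(p')` are bearing equivalent (`P_{g_ij} g'_ij = 0` for all
`(i,j) ∈ E`) if and only if `R_B(p) p' = 0`. -/
theorem stmt5 {d n : ℕ} (hd : 2 ≤ d) (hn : 2 ≤ n)
    (E : Finset (Fin n × Fin n))
    (p p' : Fin n → EuclideanSpace ℝ (Fin d))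
    (hloop : ∀ e ∈ E, e.1 ≠ e.2)
    (hsep : ∀ e ∈ E, p e.1 ≠ p e.2) (hsep' : ∀ e ∈ E, p' e.1 ≠ p' e.2) :
    (∀ e ∈ E, projP (bearing p e.1 e.2) (bearing p' e.1 e.2) = 0) ↔
      RB E p p' = 0 :=
  stmt5_general E p p' hsep hsep'
end

section
/- Let G(p) be a formation in ℝᵈ (d ≥ 2, n ≥ 2) with at least one edge. Then Null(R_B) = span{𝟏⊗I_d, p} if and only if G(p) is uniquely determined up to a translation and a scaling factor by its inter-neighbor bearings; precisely, if and only if every configuration p' = (p'_1,…,p'_n) with p'_i ≠ p'_j for all (i,j) ∈ E and P_{g_ij}(p'_j − p'_i) = 0 for all (i,j) ∈ E is of the form p' = c • p + (v,…,v) for some nonzero scalar c ∈ ℝ and some v ∈ ℝᵈ. -/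
open scoped InnerProductSpace

/-!
The null space of `R_B` is cut out by the bearing constraints `P_{g_ij}(x_j − x_i) = 0` and
contains every `c • p + v`. For `x` in it, `p + t • x` satisfies the bearing constraints of `p`,
and for all but finitely many `t` no edge collapses; uniqueness up to translation and scaling
then gives `p + t • x = c • p + v` with `t ≠ 0`, i.e. `x ∈ span{𝟏 ⊗ I_d, p}`. Conversely, a
solution `c • p + v` with no collapsed edge must have `c ≠ 0`.
-/

lemma Set.subsingleton_setOf_add_smul_eq_zero {K V : Type*} [Field K] [AddCommGroup V]
    [Module K V] {u : V} (hu : u ≠ 0) (w : V) : {t : K | u + t • w = 0}.Subsingleton := by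
  intro t ht s hs
  have hw : (t - s) • w = 0 := by
    rw [sub_smul, ← add_sub_add_left_eq_sub _ _ u, ht, hs, sub_self]
  rcases smul_eq_zero.mp hw with h | h
  · exact sub_eq_zero.mp h
  · exact absurd (by simpa [h] using ht) hu

lemma exists_ne_zero_forall_add_smul_ne_zero {K V ι : Type*} [Field K] [Infinite K]
    [AddCommGroup V] [Module K V] (s : Finset ι) (u w : ι → V) (hu : ∀ k ∈ s, u k ≠ 0) :
    ∃ t : K, t ≠ 0 ∧ ∀ k ∈ s, u k + t • w k ≠ 0 := by
  have hbad : ({0} ∪ ⋃ k ∈ s, {t : K | u k + t • w k = 0}).Finite :=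
    (Set.finite_singleton 0).union <| s.finite_toSet.biUnion fun k hk =>
      (Set.subsingleton_setOf_add_smul_eq_zero (hu k hk) (w k)).finite
  obtain ⟨t, ht⟩ := hbad.infinite_compl.nonempty
  simp only [Set.mem_compl_iff, Set.mem_union, Set.mem_singleton_iff, Set.mem_iUnion,
    Set.mem_ofPred_eq, not_or, not_exists] at ht
  exact ⟨t, ht.1, fun k hk => ht.2 k hk⟩

@[simp]
lemma relpos_apply {d n : ℕ} (i j : Fin n) (x : Fin n → EuclideanSpace ℝ (Fin d)) :
    relpos i j x = x j - x i :=
  rfl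

lemma projP_smul_self {d : ℕ} (x : EuclideanSpace ℝ (Fin d)) (a : ℝ) :
    projP x (a • x) = 0 := by
  rcases eq_or_ne x 0 with rfl | hx
  · simp
  have h : ‖x‖ ≠ 0 := norm_ne_zero_iff.mpr hx
  simp only [projP, LinearMap.sub_apply, LinearMap.id_apply, LinearMap.smul_apply,
    ContinuousLinearMap.coe_coe, LinearMap.smulRight_apply, innerSL_apply_apply,
    real_inner_smul_right, real_inner_self_eq_norm_sq, smul_smul]
  rw [sub_eq_zero]
  congr 1
  field_simp

lemma norm_smul_bearing {d n : ℕ} (p : Fin n → EuclideanSpace ℝ (Fin d)) (i j : Fin n) :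
    ‖p j - p i‖ • bearing p i j = p j - p i := by
  rcases eq_or_ne ‖p j - p i‖ 0 with h | h
  · rw [h, zero_smul, eq_comm, ← norm_eq_zero, h]
  · exact smul_inv_smul₀ h _

lemma projP_bearing_smul_sub {d n : ℕ} (p : Fin n → EuclideanSpace ℝ (Fin d)) (i j : Fin n)
    (c : ℝ) : projP (bearing p i j) (c • (p j - p i)) = 0 := by
  rw [← norm_smul_bearing, smul_smul, projP_smul_self]

lemma mem_ker_RB_iff {d n : ℕ} {E : Finset (Fin n × Fin n)}
    {p : Fin n → EuclideanSpace ℝ (Fin d)} (hsep : ∀ e ∈ E, p e.1 ≠ p e.2)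
    (x : Fin n → EuclideanSpace ℝ (Fin d)) :
    x ∈ LinearMap.ker (RB E p) ↔ ∀ e ∈ E, projP (bearing p e.1 e.2) (x e.2 - x e.1) = 0 := by
  have hnorm : ∀ e ∈ E, ‖p e.2 - p e.1‖⁻¹ ≠ 0 := fun e he =>
    inv_ne_zero (norm_ne_zero_iff.mpr (sub_ne_zero.mpr (hsep e he).symm))
  simp only [LinearMap.mem_ker, funext_iff, RB, LinearMap.pi_apply, LinearMap.smul_apply,
    LinearMap.comp_apply, relpos_apply, Pi.zero_apply, smul_eq_zero, Subtype.forall]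
  exact forall₂_congr fun e he => or_iff_right (hnorm e he)

lemma transScale_subset_ker_RB {d n : ℕ} (E : Finset (Fin n × Fin n))
    (p : Fin n → EuclideanSpace ℝ (Fin d)) :
    transScale p ⊆ LinearMap.ker (RB E p) := by
  rintro x ⟨c, v, rfl⟩
  have hdiff : ∀ i j : Fin n, (c • p + fun _ => v : Fin n → EuclideanSpace ℝ (Fin d)) j -
      (c • p + fun _ => v : Fin n → EuclideanSpace ℝ (Fin d)) i = c • (p j - p i) :=
    fun i j => by simp only [Pi.add_apply, Pi.smul_apply, smul_sub]; abel
  rw [SetLike.mem_coe, LinearMap.mem_ker]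
  funext e
  simp only [RB, LinearMap.pi_apply, LinearMap.smul_apply, LinearMap.comp_apply, relpos_apply,
    hdiff, projP_bearing_smul_sub, smul_zero, Pi.zero_apply]

lemma ker_RB_subset_transScale {d n : ℕ} {E : Finset (Fin n × Fin n)}
    {p : Fin n → EuclideanSpace ℝ (Fin d)} (hsep : ∀ e ∈ E, p e.1 ≠ p e.2)
    (huniq : ∀ p' : Fin n → EuclideanSpace ℝ (Fin d),
      (∀ e ∈ E, p' e.1 ≠ p' e.2) →
      (∀ e ∈ E, projP (bearing p e.1 e.2) (p' e.2 - p' e.1) = 0) →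
      ∃ (c : ℝ) (v : EuclideanSpace ℝ (Fin d)), c ≠ 0 ∧ p' = c • p + fun _ => v) :
    (LinearMap.ker (RB E p) : Set (Fin n → EuclideanSpace ℝ (Fin d))) ⊆ transScale p := by
  intro x hx
  rw [SetLike.mem_coe, mem_ker_RB_iff hsep] at hx
  obtain ⟨t, ht0, ht⟩ := exists_ne_zero_forall_add_smul_ne_zero (K := ℝ) E
    (fun e => p e.2 - p e.1) (fun e => x e.2 - x e.1) fun e he => sub_ne_zero.mpr (hsep e he).symm
  have hdiff : ∀ i j : Fin n, (p + t • x) j - (p + t • x) i = (p j - p i) + t • (x j - x i) :=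
    fun i j => by simp only [Pi.add_apply, Pi.smul_apply, smul_sub]; abel
  obtain ⟨c, v, -, hcv⟩ := huniq (p + t • x)
    (fun e he h => ht e he (by rw [← hdiff, h, sub_self]))
    (fun e he => by
      rw [hdiff, map_add, map_smul, hx e he, ← one_smul ℝ (p e.2 - p e.1),
        projP_bearing_smul_sub, smul_zero, add_zero])
  refine ⟨t⁻¹ * (c - 1), t⁻¹ • v, funext fun i => ?_⟩
  have hi : t • x i = (c - 1) • p i + v := by
    have := congrFun hcv i
    simp only [Pi.add_apply, Pi.smul_apply] at this
    linear_combination (norm := module) this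
  rw [Pi.add_apply, Pi.smul_apply, ← inv_smul_smul₀ ht0 (x i), hi, smul_add, smul_smul]

theorem stmt7_general {d n : ℕ}
    (E : Finset (Fin n × Fin n)) (hE : E.Nonempty)
    (p : Fin n → EuclideanSpace ℝ (Fin d))
    (hsep : ∀ e ∈ E, p e.1 ≠ p e.2) :
    (LinearMap.ker (RB E p) : Set (Fin n → EuclideanSpace ℝ (Fin d))) = transScale p ↔
      ∀ p' : Fin n → EuclideanSpace ℝ (Fin d),
        (∀ e ∈ E, p' e.1 ≠ p' e.2) →
        (∀ e ∈ E, projP (bearing p e.1 e.2) (p' e.2 - p' e.1) = 0) →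
        ∃ (c : ℝ) (v : EuclideanSpace ℝ (Fin d)), c ≠ 0 ∧ p' = c • p + fun _ => v := by
  refine ⟨fun hker p' hne hproj => ?_,
    fun huniq => (ker_RB_subset_transScale hsep huniq).antisymm (transScale_subset_ker_RB E p)⟩
  obtain ⟨c, v, rfl⟩ : p' ∈ transScale p := hker ▸ (mem_ker_RB_iff hsep p').2 hproj
  refine ⟨c, v, ?_, rfl⟩
  rintro rfl
  obtain ⟨e, he⟩ := hE
  exact hne e he (by simp)

/-- `Null(R_B) = span{𝟏 ⊗ I_d, p}` if and only if `G(p)` is uniquely determined by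
its inter-neighbor bearings up to translation and scaling: every configuration `p'`
with `p'_i ≠ p'_j` and `P_{g_ij}(p'_j − p'_i) = 0` for all edges `(i,j)` is of the
form `p' = c • p + (v, …, v)` with `c ≠ 0`. -/
theorem stmt7 {d n : ℕ} (hd : 2 ≤ d) (hn : 2 ≤ n)
    (E : Finset (Fin n × Fin n)) (hE : E.Nonempty)
    (p : Fin n → EuclideanSpace ℝ (Fin d))
    (hloop : ∀ e ∈ E, e.1 ≠ e.2) (hsep : ∀ e ∈ E, p e.1 ≠ p e.2) :
    (LinearMap.ker (RB E p) : Set (Fin n → EuclideanSpace ℝ (Fin d))) = transScale p ↔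
      ∀ p' : Fin n → EuclideanSpace ℝ (Fin d),
        (∀ e ∈ E, p' e.1 ≠ p' e.2) →
        (∀ e ∈ E, projP (bearing p e.1 e.2) (p' e.2 - p' e.1) = 0) →
        ∃ (c : ℝ) (v : EuclideanSpace ℝ (Fin d)), c ≠ 0 ∧ p' = c • p + fun _ => v :=
  stmt7_general E hE p hsep
end
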